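/- arXiv:2111.11145 — 4 statements merged into one kernel-verified Lean document; each statement's English description precedes it below -/
import Mathlib

section
/- Let G = SL(2, F_{p^n}) and P the upper unitriangular Sylow p-subgroup. Then P is a trivial intersection subgroup of G: for any g ∈ G, either gPg⁻¹ = P or gPg⁻¹ ∩ P = {1}. -/
lemma key_mul {K : Type*} [CommRing K] (a b c d x : K) (h : a * d - b * c = 1) :
    !![a, b; c, d] * !![1, x; 0, 1] * !![d, -b; -c, a] =
      !![1 - a * c * x, a ^ 2 * x; -c ^ 2 * x, 1 + a * c * x] := by
  ext i j
  fin_cases i <;> fin_cases j <;>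
      simp [Matrix.mul_apply, Fin.sum_univ_two] <;>
      first
        | linear_combination h
        | linear_combination x * h
        | linear_combination (-x) * h
        | ring

lemma conj_unitriangular {K : Type*} [Field K]
    (g y : Matrix.SpecialLinearGroup (Fin 2) K) (b : K)
    (hy : (y : Matrix (Fin 2) (Fin 2) K) = !![1, b; 0, 1]) :
    ((g * y * g⁻¹ : Matrix.SpecialLinearGroup (Fin 2) K) : Matrix (Fin 2) (Fin 2) K) =
      !![1 - (g : Matrix (Fin 2) (Fin 2) K) 0 0 * (g : Matrix (Fin 2) (Fin 2) K) 1 0 * b,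
         ((g : Matrix (Fin 2) (Fin 2) K) 0 0) ^ 2 * b;
         -((g : Matrix (Fin 2) (Fin 2) K) 1 0) ^ 2 * b,
         1 + (g : Matrix (Fin 2) (Fin 2) K) 0 0 * (g : Matrix (Fin 2) (Fin 2) K) 1 0 * b] := by
  have hdet : (g : Matrix (Fin 2) (Fin 2) K) 0 0 * (g : Matrix (Fin 2) (Fin 2) K) 1 1 -
      (g : Matrix (Fin 2) (Fin 2) K) 0 1 * (g : Matrix (Fin 2) (Fin 2) K) 1 0 = 1 := by
    have := g.2; rwa [Matrix.det_fin_two] at this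
  have h1 : ((g * y * g⁻¹ : Matrix.SpecialLinearGroup (Fin 2) K) : Matrix (Fin 2) (Fin 2) K)
      = (g : Matrix (Fin 2) (Fin 2) K) * !![1, b; 0, 1] *
        (g : Matrix (Fin 2) (Fin 2) K).adjugate := by
    simp [Matrix.SpecialLinearGroup.coe_mul, Matrix.SpecialLinearGroup.coe_inv, hy]
  rw [h1, Matrix.eta_fin_two (g : Matrix (Fin 2) (Fin 2) K), Matrix.adjugate_fin_two]
  simp only [Matrix.cons_val', Matrix.cons_val_zero, Matrix.cons_val_one, Matrix.head_cons,
    Matrix.head_fin_const, Matrix.empty_val', Matrix.cons_val_fin_one, Matrix.cons_val_one,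
    Matrix.of_apply]
  exact key_mul _ _ _ _ _ hdet


/-- The upper unitriangular Sylow `p`-subgroup `P` of `SL(2, 𝔽_{p^n})` is a trivial
intersection subgroup: for every `g`, either `gPg⁻¹ = P` or `gPg⁻¹ ∩ P = 1`. -/
theorem unitriangular_trivial_intersection_SL2 (p n : ℕ) [Fact p.Prime] (hn : 0 < n)
    (P : Subgroup (Matrix.SpecialLinearGroup (Fin 2) (GaloisField p n)))
    (hP : ∀ g : Matrix.SpecialLinearGroup (Fin 2) (GaloisField p n),
      g ∈ P ↔ ∃ b : GaloisField p n,
        (g : Matrix (Fin 2) (Fin 2) (GaloisField p n)) = !![1, b; 0, 1]) :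
    ∀ g : Matrix.SpecialLinearGroup (Fin 2) (GaloisField p n),
      P.map (MulAut.conj g).toMonoidHom = P ∨
      P.map (MulAut.conj g).toMonoidHom ⊓ P = ⊥ := by
  intro g
  set K := GaloisField p n
  have key : ∀ h : Matrix.SpecialLinearGroup (Fin 2) K,
      (h : Matrix (Fin 2) (Fin 2) K) 1 0 = 0 → ∀ y ∈ P, h * y * h⁻¹ ∈ P := by
    intro h hh y hy
    rw [hP] at hy
    obtain ⟨b, hb⟩ := hy
    rw [hP]
    refine ⟨((h : Matrix (Fin 2) (Fin 2) K) 0 0) ^ 2 * b, ?_⟩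
    rw [conj_unitriangular h y b hb, hh]
    norm_num
  by_cases hc : (g : Matrix (Fin 2) (Fin 2) K) 1 0 = 0
  · left
    apply le_antisymm
    · intro x hx
      obtain ⟨y, hy, rfl⟩ := Subgroup.mem_map.mp hx
      simpa [MulAut.conj_apply] using key g hc y hy
    · intro x hx
      have hginv : ((g⁻¹ : Matrix.SpecialLinearGroup (Fin 2) K) :
          Matrix (Fin 2) (Fin 2) K) 1 0 = 0 := by
        rw [Matrix.SpecialLinearGroup.coe_inv, Matrix.adjugate_fin_two]
        simpa using hc
      have hmem : g⁻¹ * x * g ∈ P := by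
        have := key g⁻¹ hginv x hx
        rwa [inv_inv] at this
      refine Subgroup.mem_map.mpr ⟨g⁻¹ * x * g, hmem, ?_⟩
      simp [MulAut.conj_apply]
      group
  · right
    rw [eq_bot_iff]
    intro x hx
    obtain ⟨hx1, hx2⟩ := Subgroup.mem_inf.mp hx
    obtain ⟨y, hy, rfl⟩ := Subgroup.mem_map.mp hx1
    rw [hP] at hy
    obtain ⟨b, hb⟩ := hy
    rw [hP] at hx2
    obtain ⟨b', hb'⟩ := hx2
    have hconj : ((g * y * g⁻¹ : Matrix.SpecialLinearGroup (Fin 2) K) :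
        Matrix (Fin 2) (Fin 2) K) = !![1, b'; 0, 1] := by
      simpa [MulAut.conj_apply] using hb'
    have e0 : -((g : Matrix (Fin 2) (Fin 2) K) 1 0) ^ 2 * b = 0 := by
      have e1 := congrFun (congrFun (conj_unitriangular g y b hb) 1) 0
      have e2 := congrFun (congrFun hconj 1) 0
      rw [e1] at e2
      simpa using e2
    have hb0 : b = 0 := by
      rcases mul_eq_zero.mp e0 with h | h
      · exact absurd (pow_eq_zero_iff (by norm_num)|>.mp (neg_eq_zero.mp h)) hc
      · exact h
    have hy1 : y = 1 := by
      apply Subtype.ext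
      rw [hb, hb0]
      norm_num
      exact Matrix.one_fin_two.symm
    rw [Subgroup.mem_bot]
    simp [hy1]
end

section
/- Let B be a crossed product of an F-algebra A with a finite group G whose order is invertible in F. If M is a B-module whose restriction to A is semisimple as an A-module, then M is semisimple as a B-module. -/
/-!
Choose homogeneous units `u x ∈ B_x`; then `(u x)⁻¹ ∈ B_{x⁻¹}`. Given an `A`-linear projection
`p` of `M` onto a `B`-submodule `N`, the average `|G|⁻¹ • ∑ x, u x ∘ p ∘ (u x)⁻¹` is still a
projection onto `N`, and it is `B`-linear: for `b ∈ B_y` the element `(u x)⁻¹ * b * u (y⁻¹ * x)`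
lies in `A`, hence commutes with `p`, so composing with `b` on the right permutes the conjugates
of `p` up to composing with `b` on the left. Thus every `B`-submodule has a `B`-complement.
-/

open DirectSum

theorem Units.inv_mem_graded {ι R σ : Type*} [AddGroup ι] [DecidableEq ι] [Semiring R]
    [SetLike σ R] [AddSubmonoidClass σ R] {ℬ : ι → σ} [GradedRing ℬ] {i : ι} {u : Rˣ}
    (hu : (u : R) ∈ ℬ i) : ((u⁻¹ : Rˣ) : R) ∈ ℬ (-i) := by
  have hw : (decompose ℬ ((u⁻¹ : Rˣ) : R) (-i) : R) * u = 1 := by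
    rw [← coe_decompose_mul_add_of_right_mem ℬ hu, Units.inv_mul, neg_add_cancel,
      decompose_of_mem_same ℬ (SetLike.one_mem_graded ℬ)]
  rw [← Units.eq_inv_of_mul_eq_one_right hw]
  exact SetLike.coe_mem _

theorem Units.inv_mem_of_isInternal {F G B : Type*} [CommSemiring F] [Group G] [DecidableEq G]
    [Semiring B] [Algebra F B] {𝒜 : G → Submodule F B} (hone : (1 : B) ∈ 𝒜 1)
    (hmul : ∀ x y : G, ∀ a ∈ 𝒜 x, ∀ b ∈ 𝒜 y, a * b ∈ 𝒜 (x * y)) (hint : IsInternal 𝒜)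
    {x : G} {u : Bˣ} (hu : (u : B) ∈ 𝒜 x) : ((u⁻¹ : Bˣ) : B) ∈ 𝒜 x⁻¹ := by
  let ℬ : Additive G → Submodule F B := fun g => 𝒜 g.toMul
  have : SetLike.GradedMonoid ℬ :=
    { one_mem := hone, mul_mem := fun _ _ _ _ ha hb => hmul _ _ _ ha _ hb }
  have : Decomposition ℬ := IsInternal.chooseDecomposition (ℳ := ℬ) hint
  have : GradedRing ℬ := {}
  exact Units.inv_mem_graded (ℬ := ℬ) (i := Additive.ofMul x) hu

section SumOfConjugates

variable {G B E : Type*} [Fintype G] [Semiring B] [Semiring E]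

def RingHom.sumOfConjugates (ρ : B →+* E) (U : G → Bˣ) (f : E) : E :=
  ∑ x, ρ (U x) * f * ρ ↑(U x)⁻¹

variable [Group G] {F : Type*} [CommSemiring F] [Algebra F B] {𝒜 : G → Submodule F B}

theorem RingHom.commute_sumOfConjugates_of_mem
    (hmul : ∀ x y : G, ∀ a ∈ 𝒜 x, ∀ b ∈ 𝒜 y, a * b ∈ 𝒜 (x * y))
    (ρ : B →+* E) {U : G → Bˣ} (hU : ∀ x, (U x : B) ∈ 𝒜 x)
    (hUinv : ∀ x, (((U x)⁻¹ : Bˣ) : B) ∈ 𝒜 x⁻¹) {f : E} (hf : ∀ a ∈ 𝒜 1, Commute (ρ a) f)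
    {y : G} {b : B} (hb : b ∈ 𝒜 y) : Commute (ρ b) (ρ.sumOfConjugates U f) := by
  have hconj (x : G) : ρ (U x) * f * ρ ↑(U x)⁻¹ * ρ b =
      ρ b * (ρ (U (y⁻¹ * x)) * f * ρ ↑(U (y⁻¹ * x))⁻¹) := by
    set w := y⁻¹ * x
    set a : B := ↑(U x)⁻¹ * b * U w
    have ha : a ∈ 𝒜 1 := by
      simpa [w] using hmul _ _ _ (hmul _ _ _ (hUinv x) _ hb) _ (hU w)
    have hleft : ↑(U x)⁻¹ * b = a * ↑(U w)⁻¹ := by simp [a, mul_assoc]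
    have hright : ↑(U x) * a = b * U w := by simp [a, ← mul_assoc]
    calc ρ (U x) * f * ρ ↑(U x)⁻¹ * ρ b
        = ρ (U x) * (f * ρ a) * ρ ↑(U w)⁻¹ := by
          rw [mul_assoc _ (ρ _) (ρ b), ← map_mul, hleft, map_mul]; simp only [mul_assoc]
      _ = ρ (↑(U x) * a) * f * ρ ↑(U w)⁻¹ := by
          rw [← (hf a ha).eq, map_mul ρ _ a]; simp only [mul_assoc]
      _ = ρ b * (ρ (U w) * f * ρ ↑(U w)⁻¹) := by
          rw [hright, map_mul]; simp only [mul_assoc]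
  rw [Commute, SemiconjBy, RingHom.sumOfConjugates, Finset.sum_mul, Finset.mul_sum]
  simp_rw [hconj]
  exact (Equiv.sum_comp (Equiv.mulLeft y⁻¹) fun z => ρ b * (ρ (U z) * f * ρ ↑(U z)⁻¹)).symm

theorem RingHom.commute_sumOfConjugates
    (hmul : ∀ x y : G, ∀ a ∈ 𝒜 x, ∀ b ∈ 𝒜 y, a * b ∈ 𝒜 (x * y)) (hspan : ⨆ x, 𝒜 x = ⊤)
    (ρ : B →+* E) {U : G → Bˣ} (hU : ∀ x, (U x : B) ∈ 𝒜 x)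
    (hUinv : ∀ x, (((U x)⁻¹ : Bˣ) : B) ∈ 𝒜 x⁻¹) {f : E} (hf : ∀ a ∈ 𝒜 1, Commute (ρ a) f)
    (b : B) : Commute (ρ b) (ρ.sumOfConjugates U f) := by
  have hb : b ∈ ⨆ x, 𝒜 x := hspan ▸ Submodule.mem_top
  refine Submodule.iSup_induction 𝒜 (motive := fun b => Commute (ρ b) _) hb ?_ ?_ ?_
  · exact fun y b hb => ρ.commute_sumOfConjugates_of_mem hmul hU hUinv hf hb
  · simp
  · exact fun b c hb hc => by simpa using hb.add_left hc

end SumOfConjugates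

section Module

variable {G B M : Type*} [Fintype G] [Ring B] [AddCommGroup M] [Module B M]

theorem Module.toAddMonoidEnd_mul_sumOfConjugates_apply (c : B) (U : G → Bˣ)
    (f : AddMonoid.End M) (m : M) :
    (Module.toAddMonoidEnd B M c * (Module.toAddMonoidEnd B M).sumOfConjugates U f) m =
      c • ∑ x, (U x : B) • f ((((U x)⁻¹ : Bˣ) : B) • m) := by
  rw [AddMonoid.End.coe_mul, Function.comp_apply, RingHom.sumOfConjugates]
  exact congrArg (c • ·) (AddMonoidHom.finsetSum_apply (M := M) (N := M) _ _ m)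

theorem LinearMap.isProj_inv_card_mul_sumOfConjugates {N : Submodule B M} {f : AddMonoid.End M}
    (hf : IsProj N f) (hG : IsUnit (Nat.card G : B)) (U : G → Bˣ) :
    IsProj N (Module.toAddMonoidEnd B M ↑hG.unit⁻¹ *
      (Module.toAddMonoidEnd B M).sumOfConjugates U f) := by
  constructor
  · intro m
    rw [Module.toAddMonoidEnd_mul_sumOfConjugates_apply]
    exact N.smul_mem _ (N.sum_mem fun x _ => N.smul_mem _ (hf.map_mem _))
  · intro n hn
    have hterm (x : G) : (U x : B) • f ((((U x)⁻¹ : Bˣ) : B) • n) = n := by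
      rw [hf.map_id _ (N.smul_mem _ hn), smul_smul, Units.mul_inv, one_smul]
    rw [Module.toAddMonoidEnd_mul_sumOfConjugates_apply, Fintype.sum_congr _ _ hterm,
      Finset.sum_const, Finset.card_univ, ← Nat.card_eq_fintype_card, ← Nat.cast_smul_eq_nsmul B,
      smul_smul, hG.val_inv_mul, one_smul]

theorem Submodule.exists_isCompl_of_isProj_of_commute_degreeOne [Group G] {F : Type*}
    [CommSemiring F] [Algebra F B] {𝒜 : G → Submodule F B}
    (hmul : ∀ x y : G, ∀ a ∈ 𝒜 x, ∀ b ∈ 𝒜 y, a * b ∈ 𝒜 (x * y)) (hspan : ⨆ x, 𝒜 x = ⊤)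
    {U : G → Bˣ} (hU : ∀ x, (U x : B) ∈ 𝒜 x) (hUinv : ∀ x, (((U x)⁻¹ : Bˣ) : B) ∈ 𝒜 x⁻¹)
    (hG : IsUnit (Nat.card G : B)) {N : Submodule B M} {f : AddMonoid.End M}
    (hf : LinearMap.IsProj N f) (hcomm : ∀ a ∈ 𝒜 1, Commute (Module.toAddMonoidEnd B M a) f) :
    ∃ Q, IsCompl N Q := by
  set ρ := Module.toAddMonoidEnd B M
  set π := ρ ↑hG.unit⁻¹ * ρ.sumOfConjugates U f
  have hπ (b : B) : Commute (ρ b) π := by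
    have hc : Commute (↑hG.unit⁻¹ : B) b :=
      Commute.units_inv_left (by rw [hG.unit_spec]; exact Nat.cast_commute _ b)
    exact (hc.symm.map ρ).mul_right (ρ.commute_sumOfConjugates hmul hspan hU hUinv hcomm b)
  let π' : M →ₗ[B] M :=
    { toFun := π
      map_add' := map_add π
      map_smul' := fun b m => (DFunLike.congr_fun (hπ b).eq m).symm }
  have hπ' : LinearMap.IsProj N π' :=
    have hproj := LinearMap.isProj_inv_card_mul_sumOfConjugates hf hG U
    ⟨hproj.map_mem, hproj.map_id⟩
  exact ⟨_, hπ'.isCompl⟩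

end Module

theorem crossedProduct_maschke_general
    {F : Type*} [Field F] {G : Type*} [Group G] [Finite G] [DecidableEq G]
    {B : Type*} [Ring B] [Algebra F B]
    (𝒜 : G → Submodule F B)
    (hone : (1 : B) ∈ 𝒜 1)
    (hmul : ∀ x y : G, ∀ a ∈ 𝒜 x, ∀ b ∈ 𝒜 y, a * b ∈ 𝒜 (x * y))
    (hinternal : DirectSum.IsInternal 𝒜)
    (hcross : ∀ x : G, ∃ u ∈ 𝒜 x, IsUnit u)
    (hinv : (Nat.card G : F) ≠ 0)
    (A : Type*) [Ring A] [Algebra F A]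
    (ι : A →ₐ[F] B)
    (hrange : Subalgebra.toSubmodule ι.range = 𝒜 1)
    (M : Type*) [AddCommGroup M] [Module B M] [Module A M]
    (hcompat : ∀ (a : A) (m : M), a • m = ι a • m)
    (hM : IsSemisimpleModule A M) :
    IsSemisimpleModule B M := by
  have := Fintype.ofFinite G
  have hunits (x : G) : ∃ u : Bˣ, (u : B) ∈ 𝒜 x := by
    obtain ⟨_, hu, u, rfl⟩ := hcross x
    exact ⟨u, hu⟩
  choose U hU using hunits
  have hG : IsUnit (Nat.card G : B) := by
    simpa using hinv.isUnit.map (algebraMap F B)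
  refine { exists_isCompl := fun N => ?_ }
  let N_A : Submodule A M :=
    { N.toAddSubmonoid with smul_mem' := fun a m hm => (hcompat a m).symm ▸ N.smul_mem _ hm }
  obtain ⟨Q, hQ⟩ := hM.exists_isCompl N_A
  set p := N_A.projection Q hQ
  refine N.exists_isCompl_of_isProj_of_commute_degreeOne hmul hinternal.submodule_iSup_eq_top hU
    (fun x => Units.inv_mem_of_isInternal hone hmul hinternal (hU x)) hG (f := p.toAddMonoidHom)
    ⟨Submodule.projection_apply_mem hQ, fun _ => Submodule.projection_apply_of_mem_left hQ⟩ ?_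
  rw [← hrange]
  rintro _ ⟨a, rfl⟩
  ext m
  change ι a • p m = p (ι a • m)
  rw [← hcompat, ← hcompat, map_smul]

/-- Maschke theory for crossed products: if `B = ⊕_{x ∈ G} 𝒜 x` is a crossed product of
the `F`-algebra `A = 𝒜 1` with a finite group `G` whose order is invertible in `F`,
then every `B`-module whose restriction to `A` is semisimple is semisimple over `B`. -/
theorem crossedProduct_maschke
    {F : Type*} [Field F] {G : Type*} [Group G] [Finite G] [DecidableEq G]
    {B : Type*} [Ring B] [Algebra F B]
    (𝒜 : G → Submodule F B)
    (hone : (1 : B) ∈ 𝒜 1)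
    (hmul : ∀ x y : G, ∀ a ∈ 𝒜 x, ∀ b ∈ 𝒜 y, a * b ∈ 𝒜 (x * y))
    (hinternal : DirectSum.IsInternal 𝒜)
    (hcross : ∀ x : G, ∃ u ∈ 𝒜 x, IsUnit u)
    (hinv : (Nat.card G : F) ≠ 0)
    (A : Type*) [Ring A] [Algebra F A]
    (ι : A →ₐ[F] B) (hι : Function.Injective ι)
    (hrange : Subalgebra.toSubmodule ι.range = 𝒜 1)
    (M : Type*) [AddCommGroup M] [Module B M] [Module A M]
    (hcompat : ∀ (a : A) (m : M), a • m = ι a • m)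
    (hM : IsSemisimpleModule A M) :
    IsSemisimpleModule B M :=
  crossedProduct_maschke_general 𝒜 hone hmul hinternal hcross hinv A ι hrange M hcompat hM
end

section
/- Let B be a crossed product of a finite-dimensional F-algebra A with a finite group G whose order is invertible in F. Then the Jacobson radical of B satisfies J(B) = J(A)·B = B·J(A). -/
/-!
Write `T = B·J(A)`. Conjugation by a homogeneous unit `uₓ` is a ring automorphism of `A = B₁`,
so it preserves `J(A)`; hence `J(A)·Bₓ = Bₓ·J(A)`, and `T` is a two-sided ideal which is also
the additive span of `J(A)·B`. As `J(A)` is nilpotent, so is `T`, whence `T ⊆ J(B)`.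
Conversely `J(A)` kills `B/T`, which is therefore a semisimple `A`-module. Averaging an
`A`-linear projection over the units `uₓ` (possible as `|G|` is invertible in `F`) makes it
`B`-linear, so `B/T` is a semisimple `B`-module; thus `J(B)` annihilates it and `J(B) ⊆ T`.
-/

section Jacobson

variable {R : Type*} [Ring R]

theorem Ideal.isTwoSided_span_of_mul_mem {X : Set R}
    (h : ∀ x ∈ X, ∀ r : R, x * r ∈ Ideal.span X) : (Ideal.span X).IsTwoSided := by
  refine ⟨fun {a} r ha => ?_⟩
  induction ha using Submodule.span_induction with
  | mem x hx => exact h x hx r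
  | zero => simp
  | add a b _ _ ha hb => rw [add_mul]; exact add_mem ha hb
  | smul c a _ ha => rw [smul_eq_mul, mul_assoc]; exact Ideal.mul_mem_left _ c ha

theorem Ideal.le_jacobson_of_isNilpotent {I : Ideal R} (hI : IsNilpotent I) :
    I ≤ Ring.jacobson R := by
  obtain ⟨n, hn⟩ := hI
  intro x hx
  rw [← Ideal.jacobson_bot, Ideal.mem_jacobson_iff]
  intro y
  have hyx : IsNilpotent (y * x) :=
    ⟨n, by simpa [hn] using Ideal.pow_mem_pow (I.mul_mem_left y hx) n⟩
  obtain ⟨z, hz⟩ := hyx.isUnit_add_one.exists_left_inv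
  exact ⟨z, by rw [Ideal.mem_bot, mul_assoc, ← mul_add_one, hz, sub_self]⟩

theorem Ideal.map_mul_le_of_isTwoSided {S F : Type*} [Ring S] [FunLike F R S] [RingHomClass F R S]
    (f : F) (I K : Ideal R)
    [(I.map f).IsTwoSided] : I.map f * K.map f ≤ (I * K).map f := by
  rw [Ideal.mul_le]
  intro a ha b hb
  induction hb using Submodule.span_induction generalizing a with
  | mem _ hk =>
    obtain ⟨k, hk, rfl⟩ := hk
    induction ha using Submodule.span_induction with
    | mem _ hi =>
      obtain ⟨i, hi, rfl⟩ := hi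
      rw [← map_mul]
      exact Ideal.mem_map_of_mem f (Ideal.mul_mem_mul hi hk)
    | zero => simp
    | add _ _ _ _ h₁ h₂ => rw [add_mul]; exact add_mem h₁ h₂
    | smul c _ _ h => rw [smul_eq_mul, mul_assoc]; exact Ideal.mul_mem_left _ c h
  | zero => simp
  | add _ _ _ _ h₁ h₂ => rw [mul_add]; exact add_mem (h₁ a ha) (h₂ a ha)
  | smul c b _ h => rw [smul_eq_mul, ← mul_assoc]; exact h _ (Ideal.mul_mem_right c _ ha)

theorem Ideal.isNilpotent_map {S F : Type*} [Ring S] [FunLike F R S] [RingHomClass F R S]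
    (f : F) {I : Ideal R}
    [I.IsTwoSided] [(I.map f).IsTwoSided] (hI : IsNilpotent I) : IsNilpotent (I.map f) := by
  obtain ⟨n, hn⟩ := hI
  have hpow : ∀ m : ℕ, I.map f ^ m ≤ (I ^ m).map f := by
    intro m
    induction m with
    | zero => simp only [Submodule.pow_zero, Ideal.one_eq_top, Ideal.map_top, le_refl]
    | succ m ih =>
      rw [Ideal.IsTwoSided.pow_succ, Ideal.IsTwoSided.pow_succ]
      exact (Ideal.mul_mono_right ih).trans (Ideal.map_mul_le_of_isTwoSided f _ _)
  exact ⟨n, eq_bot_iff.mpr (by simpa [hn] using hpow n)⟩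

theorem IsSemiprimaryRing.isSemisimpleModule_of_isTorsionBySet [IsSemiprimaryRing R]
    {M : Type*} [AddCommGroup M] [Module R M]
    (hM : Module.IsTorsionBySet R M (Ring.jacobson R)) : IsSemisimpleModule R M :=
  letI := hM.module
  hM.isSemisimpleModule_iff.mp inferInstance

theorem Ideal.coe_span_eq_addSubgroupClosure {X : Set R} [(Ideal.span X).IsTwoSided]
    (h : ∀ x ∈ X, ∀ r : R, r * x ∈ AddSubgroup.closure {z | ∃ x ∈ X, ∃ r, z = x * r}) :
    (Ideal.span X : Set R) = AddSubgroup.closure {z | ∃ x ∈ X, ∃ r, z = x * r} := by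
  set C := AddSubgroup.closure {z | ∃ x ∈ X, ∃ r, z = x * r}
  have mul_mem_right : ∀ c ∈ C, ∀ r, c * r ∈ C := by
    intro c hc r
    induction hc using AddSubgroup.closure_induction with
    | mem _ hc =>
      obtain ⟨x, hx, r', rfl⟩ := hc
      exact AddSubgroup.subset_closure ⟨x, hx, r' * r, mul_assoc x r' r⟩
    | zero => simp
    | add _ _ _ _ h₁ h₂ => rw [add_mul]; exact add_mem h₁ h₂
    | neg _ _ h => rw [neg_mul]; exact neg_mem h
  have mul_mem_left : ∀ c ∈ C, ∀ r, r * c ∈ C := by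
    intro c hc r
    induction hc using AddSubgroup.closure_induction with
    | mem _ hc =>
      obtain ⟨x, hx, r', rfl⟩ := hc
      rw [← mul_assoc]
      exact mul_mem_right _ (h x hx r) r'
    | zero => simp
    | add _ _ _ _ h₁ h₂ => rw [mul_add]; exact add_mem h₁ h₂
    | neg _ _ h => rw [mul_neg]; exact neg_mem h
  let C' : Ideal R := { C.toAddSubmonoid with smul_mem' := fun r c hc => mul_mem_left c hc r }
  apply subset_antisymm
  · exact (Ideal.span_le (I := C')).mpr fun x hx =>
      AddSubgroup.subset_closure ⟨x, hx, 1, (mul_one x).symm⟩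
  · refine (AddSubgroup.closure_le (Ideal.span X).toAddSubgroup).mpr ?_
    rintro _ ⟨x, hx, r, rfl⟩
    exact Ideal.mul_mem_right r _ (Ideal.subset_span hx)

end Jacobson

theorem AlgHom.image_jacobson_eq {F A B : Type*} [CommRing F] [Ring A] [Ring B] [Algebra F A]
    [Algebra F B] (ι : A →ₐ[F] B) (hι : Function.Injective ι) :
    ι '' Ring.jacobson A = ι.range.val '' Ring.jacobson ι.range := by
  have hker : RingHom.ker (ι.rangeRestrict : A →+* ι.range) ≤ Ring.jacobson A := by
    intro a ha
    rw [RingHom.mem_ker] at ha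
    have : ι a = 0 := congrArg Subtype.val ha
    simp [hι (this.trans (map_zero ι).symm)]
  have : RingHomSurjective (ι.rangeRestrict : A →+* ι.range) := ⟨ι.rangeRestrict_surjective⟩
  rw [← Ring.map_jacobson_of_ker_le hker, Submodule.map_coe, Set.image_image]
  rfl

theorem Subalgebra.exists_conj_mem_jacobson {F B : Type*} [CommRing F] [Ring B] [Algebra F B]
    {S : Subalgebra F B} (u : Bˣ) (hu : ∀ s ∈ S, ↑u * s * ↑u⁻¹ ∈ S)
    (hu' : ∀ s ∈ S, ↑u⁻¹ * s * ↑u ∈ S) {j : S} (hj : j ∈ Ring.jacobson S) :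
    ∃ j' ∈ Ring.jacobson S, (j' : B) = u * j * ↑u⁻¹ := by
  let σ : S →+* S :=
    { toFun s := ⟨u * s * ↑u⁻¹, hu s s.2⟩
      map_one' := by ext; simp
      map_mul' a b := by ext; simp [mul_assoc]
      map_zero' := by ext; simp
      map_add' a b := by ext; simp [mul_add, add_mul] }
  have : RingHomSurjective σ :=
    ⟨fun s => ⟨⟨u⁻¹ * s * u, hu' s s.2⟩, by ext; simp [σ, mul_assoc]⟩⟩
  exact ⟨σ j, Ring.le_comap_jacobson σ hj, rfl⟩

theorem DirectSum.IsInternal.inv_mem_of_mem {F G B : Type*} [CommRing F] [Group G] [Fintype G]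
    [DecidableEq G] [Ring B] [Algebra F B] {𝒜 : G → Submodule F B} (h𝒜 : DirectSum.IsInternal 𝒜)
    (hone : (1 : B) ∈ 𝒜 1) (hmul : ∀ x y : G, ∀ a ∈ 𝒜 x, ∀ b ∈ 𝒜 y, a * b ∈ 𝒜 (x * y))
    {x : G} (v : Bˣ) (hv : (v : B) ∈ 𝒜 x) : (↑v⁻¹ : B) ∈ 𝒜 x⁻¹ := by
  obtain ⟨μ, hμ⟩ := (Submodule.mem_iSup_finset_iff_exists_sum (s := (Finset.univ : Finset G)) 𝒜
    (↑v⁻¹ : B)).mp (by simp [h𝒜.submodule_iSup_eq_top])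
  set ν : G → B := fun y => μ y
  have hsum : ∑ y, (v : B) * ν (x⁻¹ * y) = ∑ y, Pi.single (M := fun _ : G => B) 1 1 y := by
    rw [Finset.sum_pi_single', if_pos (Finset.mem_univ _), ← Finset.mul_sum,
      show ∑ y, ν (x⁻¹ * y) = ∑ y, ν y from Equiv.sum_comp (Equiv.mulLeft x⁻¹) ν, hμ, v.mul_inv]
  have hmem : ∀ y ∈ Finset.univ, (v : B) * ν (x⁻¹ * y) ∈ 𝒜 y ∧
      Pi.single (M := fun _ : G => B) 1 1 y ∈ 𝒜 y := by
    intro y _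
    refine ⟨by simpa using hmul _ _ _ hv _ (μ (x⁻¹ * y)).2, ?_⟩
    rcases eq_or_ne y 1 with rfl | hy
    · simpa using hone
    · simp [hy]
  have hν := (iSupIndep_iff_finsetSum_eq_imp_eq 𝒜).mp h𝒜.submodule_iSupIndep _ _ _ hmem hsum 1
    (Finset.mem_univ 1)
  have : ν x⁻¹ = ↑v⁻¹ := by
    simpa [← mul_assoc] using congrArg ((↑v⁻¹ : B) * ·) hν
  exact this ▸ (μ x⁻¹).2

structure IsCrossedProduct {F G B : Type*} [CommRing F] [Group G] [DecidableEq G] [Ring B]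
    [Algebra F B] (𝒜 : G → Submodule F B) (u : G → Bˣ) : Prop where
  mul_mem {x y : G} {a b : B} : a ∈ 𝒜 x → b ∈ 𝒜 y → a * b ∈ 𝒜 (x * y)
  isInternal : DirectSum.IsInternal 𝒜
  unit_mem (x : G) : (u x : B) ∈ 𝒜 x
  inv_mem (x : G) : (↑(u x)⁻¹ : B) ∈ 𝒜 x⁻¹

theorem exists_isCrossedProduct {F G B : Type*} [CommRing F] [Group G] [Finite G] [DecidableEq G]
    [Ring B] [Algebra F B] {𝒜 : G → Submodule F B} (hone : (1 : B) ∈ 𝒜 1)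
    (hmul : ∀ x y : G, ∀ a ∈ 𝒜 x, ∀ b ∈ 𝒜 y, a * b ∈ 𝒜 (x * y))
    (hinternal : DirectSum.IsInternal 𝒜) (hcross : ∀ x : G, ∃ u ∈ 𝒜 x, IsUnit u) :
    ∃ u : G → Bˣ, IsCrossedProduct 𝒜 u := by
  have := Fintype.ofFinite G
  choose v hv hunit using hcross
  exact ⟨fun x => (hunit x).unit,
    { mul_mem := fun ha hb => hmul _ _ _ ha _ hb
      isInternal := hinternal
      unit_mem := hv
      inv_mem := fun x => hinternal.inv_mem_of_mem hone hmul _ (hv x) }⟩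

namespace IsCrossedProduct

variable {F G B : Type*} [Group G] [DecidableEq G] [Ring B]

section CommRing

variable [CommRing F] [Algebra F B] {𝒜 : G → Submodule F B} {u : G → Bˣ}

theorem one_mem (h : IsCrossedProduct 𝒜 u) : (1 : B) ∈ 𝒜 1 := by
  simpa using h.mul_mem (h.unit_mem 1) (h.inv_mem 1)

def baseSubalgebra (h : IsCrossedProduct 𝒜 u) : Subalgebra F B :=
  (𝒜 1).toSubalgebra h.one_mem fun _ _ ha hb => by simpa using h.mul_mem ha hb

@[simp]
theorem mem_baseSubalgebra (h : IsCrossedProduct 𝒜 u) {b : B} :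
    b ∈ h.baseSubalgebra ↔ b ∈ 𝒜 1 :=
  Iff.rfl

theorem conj_mem (h : IsCrossedProduct 𝒜 u) (x : G) {s : B} (hs : s ∈ 𝒜 1) :
    ↑(u x) * s * ↑(u x)⁻¹ ∈ 𝒜 1 := by
  simpa using h.mul_mem (h.mul_mem (h.unit_mem x) hs) (h.inv_mem x)

theorem inv_conj_mem (h : IsCrossedProduct 𝒜 u) (x : G) {s : B} (hs : s ∈ 𝒜 1) :
    ↑(u x)⁻¹ * s * ↑(u x) ∈ 𝒜 1 := by
  simpa using h.mul_mem (h.mul_mem (h.inv_mem x) hs) (h.unit_mem x)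

@[elab_as_elim]
theorem induction_on (h : IsCrossedProduct 𝒜 u) {motive : B → Prop} (b : B)
    (mem : ∀ x, ∀ a ∈ 𝒜 x, motive a) (zero : motive 0)
    (add : ∀ a c, motive a → motive c → motive (a + c)) : motive b :=
  Submodule.iSup_induction 𝒜 (motive := motive)
    (h.isInternal.submodule_iSup_eq_top ▸ Submodule.mem_top) mem zero add

theorem exists_jacobson_mul_eq (h : IsCrossedProduct 𝒜 u) {x : G} {b : B} (hb : b ∈ 𝒜 x)
    {j : h.baseSubalgebra} (hj : j ∈ Ring.jacobson h.baseSubalgebra) :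
    ∃ j' ∈ Ring.jacobson h.baseSubalgebra, (j : B) * b = u x * j' := by
  obtain ⟨j₁, hj₁, hj₁_eq⟩ := Subalgebra.exists_conj_mem_jacobson (u x)⁻¹
    (fun s hs => by simpa using h.inv_conj_mem x hs) (fun s hs => by simpa using h.conj_mem x hs) hj
  let s : h.baseSubalgebra := ⟨↑(u x)⁻¹ * b, by simpa using h.mul_mem (h.inv_mem x) hb⟩
  refine ⟨j₁ * s, Ideal.mul_mem_right s _ hj₁, ?_⟩
  simp [s, hj₁_eq, mul_assoc]

theorem exists_mul_jacobson_eq (h : IsCrossedProduct 𝒜 u) {x : G} {b : B} (hb : b ∈ 𝒜 x)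
    {j : h.baseSubalgebra} (hj : j ∈ Ring.jacobson h.baseSubalgebra) :
    ∃ j' ∈ Ring.jacobson h.baseSubalgebra, b * j = j' * u x := by
  obtain ⟨j₁, hj₁, hj₁_eq⟩ := Subalgebra.exists_conj_mem_jacobson (u x)
    (fun s hs => h.conj_mem x hs) (fun s hs => h.inv_conj_mem x hs) hj
  let s : h.baseSubalgebra := ⟨b * ↑(u x)⁻¹, by simpa using h.mul_mem hb (h.inv_mem x)⟩
  refine ⟨s * j₁, Ideal.mul_mem_left _ s hj₁, ?_⟩
  simp [s, hj₁_eq, mul_assoc]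

theorem isTwoSided_map_jacobson (h : IsCrossedProduct 𝒜 u) :
    ((Ring.jacobson h.baseSubalgebra).map h.baseSubalgebra.val).IsTwoSided := by
  refine Ideal.isTwoSided_span_of_mul_mem ?_
  rintro _ ⟨j, hj, rfl⟩ r
  induction r using h.induction_on with
  | mem x b hb =>
    obtain ⟨j', hj', hjb⟩ := h.exists_jacobson_mul_eq hb hj
    rw [Subalgebra.coe_val, hjb]
    exact Ideal.mul_mem_left _ _ (Ideal.subset_span ⟨j', hj', rfl⟩)
  | zero => simp
  | add a c ha hc => rw [mul_add]; exact add_mem ha hc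

theorem mul_mem_closure (h : IsCrossedProduct 𝒜 u) (r : B) {j : h.baseSubalgebra}
    (hj : j ∈ Ring.jacobson h.baseSubalgebra) :
    r * j ∈ AddSubgroup.closure
      {z | ∃ x ∈ h.baseSubalgebra.val '' Ring.jacobson h.baseSubalgebra, ∃ r, z = x * r} := by
  induction r using h.induction_on with
  | mem x b hb =>
    obtain ⟨j', hj', hbj⟩ := h.exists_mul_jacobson_eq hb hj
    exact AddSubgroup.subset_closure ⟨j', ⟨j', hj', rfl⟩, u x, hbj⟩
  | zero => simp
  | add a c ha hc => rw [add_mul]; exact add_mem ha hc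

variable [Fintype G] {M : Type*} [AddCommGroup M] [Module B M]

theorem sum_units_smul_map_smul (h : IsCrossedProduct 𝒜 u) (f : M →ₗ[h.baseSubalgebra] M)
    (b : B) (m : M) :
    ∑ x, u x • f ((u x)⁻¹ • b • m) = b • ∑ x, u x • f ((u x)⁻¹ • m) := by
  induction b using h.induction_on with
  | mem y b hb =>
    -- reindex by `x ↦ y * x`: then `(u (y * x))⁻¹ * b * u x` has degree `1`, so commutes with `f`
    rw [Finset.smul_sum, ← Equiv.sum_comp (Equiv.mulLeft y)]
    refine Finset.sum_congr rfl fun x _ => ?_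
    let s : h.baseSubalgebra := ⟨↑(u (y * x))⁻¹ * b * u x, by
      simpa using h.mul_mem (h.mul_mem (h.inv_mem (y * x)) hb) (h.unit_mem x)⟩
    have hs : (u (y * x))⁻¹ • b • m = s • (u x)⁻¹ • m := by
      simp [s, Subalgebra.smul_def, Units.smul_def, smul_smul, mul_assoc]
    rw [Equiv.coe_mulLeft, hs, map_smul]
    simp [s, Subalgebra.smul_def, Units.smul_def, smul_smul, ← mul_assoc]
  | zero => simp
  | add a c ha hc => simp only [add_smul, smul_add, map_add, Finset.sum_add_distrib, ha, hc]

end CommRing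

section Field

variable [Field F] [Algebra F B] {𝒜 : G → Submodule F B} {u : G → Bˣ} [Fintype G]
  {M : Type*} [AddCommGroup M] [Module B M] [Module F M] [IsScalarTower F B M]

def average (h : IsCrossedProduct 𝒜 u) (f : M →ₗ[h.baseSubalgebra] M) : M →ₗ[B] M where
  toFun m := (Fintype.card G : F)⁻¹ • ∑ x, u x • f ((u x)⁻¹ • m)
  map_add' m m' := by simp only [smul_add, map_add, Finset.sum_add_distrib]
  map_smul' b m := by
    rw [RingHom.id_apply, h.sum_units_smul_map_smul, smul_comm]

theorem average_apply (h : IsCrossedProduct 𝒜 u) (f : M →ₗ[h.baseSubalgebra] M) (m : M) :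
    h.average f m = (Fintype.card G : F)⁻¹ • ∑ x, u x • f ((u x)⁻¹ • m) :=
  rfl

theorem isSemisimpleModule (h : IsCrossedProduct 𝒜 u) (hG : (Fintype.card G : F) ≠ 0)
    [IsSemisimpleModule h.baseSubalgebra M] : IsSemisimpleModule B M := by
  refine (isSemisimpleModule_iff B M).mpr ⟨fun N => ?_⟩
  obtain ⟨N', hN'⟩ := exists_isCompl (N.restrictScalars h.baseSubalgebra)
  let π := (N.restrictScalars h.baseSubalgebra).projection N' hN'
  have hmem : ∀ m, h.average π m ∈ N := fun m =>
    N.smul_of_tower_mem _ <| N.sum_mem fun x _ =>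
      N.smul_of_tower_mem _ (Submodule.projection_apply_mem hN' _)
  refine ⟨LinearMap.ker ((h.average π).codRestrict N hmem),
    LinearMap.isCompl_of_proj fun n => Subtype.ext ?_⟩
  have hπ : ∀ x, π ((u x)⁻¹ • (n : M)) = (u x)⁻¹ • (n : M) :=
    fun x => Submodule.projection_apply_left hN' ⟨_, N.smul_of_tower_mem _ n.2⟩
  simp only [LinearMap.codRestrict_apply, average_apply, hπ, smul_inv_smul, Finset.sum_const,
    Finset.card_univ]
  rw [← Nat.cast_smul_eq_nsmul F, smul_smul, inv_mul_cancel₀ hG, one_smul]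

theorem jacobson_eq (h : IsCrossedProduct 𝒜 u) (hG : (Fintype.card G : F) ≠ 0)
    [IsSemiprimaryRing h.baseSubalgebra] :
    Ring.jacobson B = (Ring.jacobson h.baseSubalgebra).map h.baseSubalgebra.val := by
  set T := (Ring.jacobson h.baseSubalgebra).map h.baseSubalgebra.val
  have := h.isTwoSided_map_jacobson
  refine le_antisymm ?_
    (Ideal.le_jacobson_of_isNilpotent (Ideal.isNilpotent_map _ IsSemiprimaryRing.isNilpotent))
  have : IsSemisimpleModule h.baseSubalgebra (B ⧸ T) := by
    refine IsSemiprimaryRing.isSemisimpleModule_of_isTorsionBySet fun m ⟨j, hj⟩ => ?_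
    induction m using Submodule.Quotient.induction_on with
    | _ b =>
      rw [← Submodule.Quotient.mk_smul, Submodule.Quotient.mk_eq_zero, Subalgebra.smul_def,
        smul_eq_mul]
      exact Ideal.mul_mem_right b T (Ideal.mem_map_of_mem _ hj)
  have := h.isSemisimpleModule hG (M := B ⧸ T)
  intro k hk
  have hk1 := Module.mem_annihilator.mp
    (IsSemisimpleModule.jacobson_le_annihilator B (B ⧸ T) hk) (Submodule.Quotient.mk 1)
  rwa [← Submodule.Quotient.mk_smul, Submodule.Quotient.mk_eq_zero, smul_eq_mul, mul_one] at hk1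

end Field

end IsCrossedProduct

/-- For a crossed product `B = ⊕_{x ∈ G} 𝒜 x` of a finite-dimensional `F`-algebra
`A = 𝒜 1` with a finite group `G` whose order is invertible in `F`, the Jacobson radical
satisfies `J(B) = B·J(A) = J(A)·B`. -/
theorem crossedProduct_jacobson
    {F : Type*} [Field F] {G : Type*} [Group G] [Finite G] [DecidableEq G]
    {B : Type*} [Ring B] [Algebra F B]
    (𝒜 : G → Submodule F B)
    (hone : (1 : B) ∈ 𝒜 1)
    (hmul : ∀ x y : G, ∀ a ∈ 𝒜 x, ∀ b ∈ 𝒜 y, a * b ∈ 𝒜 (x * y))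
    (hinternal : DirectSum.IsInternal 𝒜)
    (hcross : ∀ x : G, ∃ u ∈ 𝒜 x, IsUnit u)
    (hinv : (Nat.card G : F) ≠ 0)
    (A : Type*) [Ring A] [Algebra F A] [FiniteDimensional F A]
    (ι : A →ₐ[F] B) (hι : Function.Injective ι)
    (hrange : Subalgebra.toSubmodule ι.range = 𝒜 1) :
    ((Ideal.jacobson (⊥ : Ideal B)) : Set B) =
      (Submodule.span B (ι '' ((Ideal.jacobson (⊥ : Ideal A)) : Set A)) : Set B) ∧
    ((Ideal.jacobson (⊥ : Ideal B)) : Set B) =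
      (AddSubgroup.closure {z : B | ∃ j ∈ ι '' ((Ideal.jacobson (⊥ : Ideal A)) : Set A),
        ∃ b : B, z = j * b} : Set B) := by
  have := Fintype.ofFinite G
  obtain ⟨u, h⟩ := exists_isCrossedProduct hone hmul hinternal hcross
  have hS : ι.range = h.baseSubalgebra := Subalgebra.toSubmodule_injective hrange
  have : FiniteDimensional F ι.range :=
    (AlgEquiv.ofInjective ι hι).toLinearEquiv.finiteDimensional
  have : IsArtinianRing ι.range := IsArtinianRing.of_finite F ι.range
  have : IsSemiprimaryRing h.baseSubalgebra := hS ▸ inferInstance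
  have hJ := ι.image_jacobson_eq hι
  rw [hS] at hJ
  rw [Ideal.jacobson_bot, Ideal.jacobson_bot, hJ,
    h.jacobson_eq (by rwa [Nat.card_eq_fintype_card] at hinv)]
  have : (Ideal.span (h.baseSubalgebra.val '' Ring.jacobson h.baseSubalgebra)).IsTwoSided :=
    h.isTwoSided_map_jacobson
  exact ⟨rfl, Ideal.coe_span_eq_addSubgroupClosure fun _ ⟨j, hj, hx⟩ r =>
    hx ▸ h.mul_mem_closure r hj⟩
end

section
/- Let G be a finite group, H ≤ G, k' a field of characteristic p with a subfield k, and Γ = Gal(k'/k) (k' finite). If P is a p-subgroup with Brauer map Br_P : (k'G)^P → k'C_G(P), and b is a block of k'G with defect group P whose Brauer correspondent in k'N_G(P) is c, then the smallest field k[b] generated over k by the coefficients of b equals the smallest field k[c] generated over k by the coefficients of c. -/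
open scoped Classical

/-- The (coefficient-truncation realization of the) Brauer map with respect to a subset
`C ⊆ G`: it cuts off a group algebra element to its coefficients on `C`.  For a
`p`-subgroup `P`, the Brauer map `Br_P` is truncation to `C_G(P)` (applied to `P`-fixed
elements). -/
noncomputable def brauerTrunc {k' : Type*} [Field k'] {G : Type*} [Group G]
    (C : Set G) (a : MonoidAlgebra k' G) : MonoidAlgebra k' G :=
  MonoidAlgebra.ofCoeff (Finsupp.filter (· ∈ C) a.coeff)

/-- A block: a primitive idempotent of the center of a ring. -/
def IsBlockIdem {R : Type*} [Ring R] (b : R) : Prop :=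
  b ∈ Set.center R ∧ IsIdempotentElem b ∧ b ≠ 0 ∧
    ∀ d e : R, d ∈ Set.center R → e ∈ Set.center R →
      IsIdempotentElem d → IsIdempotentElem e → d * e = 0 → b = d + e →
        d = 0 ∨ e = 0

/-- `P` is a defect group of `b`: a maximal `p`-subgroup `P` with `Br_P b ≠ 0`. -/
def IsDefectGroup (p : ℕ) {k' : Type*} [Field k'] {G : Type*} [Group G]
    (b : MonoidAlgebra k' G) (P : Subgroup G) : Prop :=
  IsPGroup p P ∧
    brauerTrunc (Subgroup.centralizer (P : Set G) : Set G) b ≠ 0 ∧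
    ∀ Q : Subgroup G, IsPGroup p Q →
      brauerTrunc (Subgroup.centralizer (Q : Set G) : Set G) b ≠ 0 → P ≤ Q → Q = P


/-!
A ring automorphism `σ` of `k'` acts coefficientwise on group algebras; it maps blocks to blocks
and commutes with `Br_P`. On central elements `Br_P` is multiplicative: in a coefficient of a
product, the terms indexed outside `C_G(P)` fall into `P`-conjugation orbits of `p`-power length
and cancel in characteristic `p`. Hence a block is determined by its nonzero Brauer image, so `σ`
fixes `b` iff it fixes `Br_P b = Br_P c` iff it fixes `c`. By Galois theory of the finite field
extension `k'/k`, the intermediate fields `k[b]` and `k[c]` have the same fixing group, hence are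
equal.
-/

open MulAction

theorem IsPGroup.sum_eq_zero_of_forall_mem_fixedPoints {p : ℕ} [Fact p.Prime] {Q X R : Type*}
    [Group Q] [MulAction Q X] [Fintype X] [Semiring R] [CharP R p] (hQ : IsPGroup p Q)
    {f : X → R} (hf : ∀ (q : Q) x, f (q • x) = f x) (hfix : ∀ x ∈ fixedPoints Q X, f x = 0) :
    ∑ x, f x = 0 := by
  classical
  rw [← Finset.sum_fiberwise Finset.univ (Quotient.mk (orbitRel Q X)) f]
  refine Finset.sum_eq_zero fun ω _ => ?_
  obtain ⟨x₀, rfl⟩ := ω.exists_rep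
  have hfiber : Finset.univ.filter (fun x => Quotient.mk (orbitRel Q X) x = ⟦x₀⟧) =
      (orbit Q x₀).toFinset := by
    ext x
    simp [Quotient.eq, orbitRel_apply]
  have hconst : ∀ x ∈ (orbit Q x₀).toFinset, f x = f x₀ := by
    intro x hx
    obtain ⟨q, rfl⟩ := Set.mem_toFinset.mp hx
    exact hf q x₀
  rw [hfiber, Finset.sum_congr rfl hconst, Finset.sum_const, nsmul_eq_mul, Set.toFinset_card,
    ← Nat.card_eq_fintype_card]
  obtain ⟨n, hn⟩ := hQ.card_orbit x₀
  rcases n with _ | n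
  · rw [hfix x₀ (mem_fixedPoints_iff_card_orbit_eq_one.mpr ?_), mul_zero]
    rw [← Nat.card_eq_fintype_card, hn, pow_zero]
  · rw [hn, Nat.cast_pow, CharP.cast_eq_zero, zero_pow n.succ_ne_zero, zero_mul]

namespace IntermediateField

variable {F E : Type*} [Field F] [Field E] [Algebra F E]

theorem forall_mem_adjoin_apply_eq_self_iff (σ : Gal(E/F)) (s : Set E) :
    (∀ x ∈ adjoin F s, σ x = x) ↔ ∀ x ∈ s, σ x = x := by
  refine ⟨fun h x hx => h x (subset_adjoin F s hx), fun h x hx => ?_⟩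
  have hle : (adjoin F s).toSubfield ≤ RingHom.eqLocusField (σ : E →+* E) (RingHom.id E) := by
    refine Subfield.closure_le.mpr ?_
    rintro _ (⟨r, rfl⟩ | hx)
    · exact σ.commutes r
    · exact h _ hx
  exact hle hx

theorem adjoin_eq_of_forall_apply_eq_self_iff [FiniteDimensional F E] [IsGalois F E] {s t : Set E}
    (h : ∀ σ : Gal(E/F), (∀ x ∈ s, σ x = x) ↔ ∀ x ∈ t, σ x = x) :
    adjoin F s = adjoin F t := by
  rw [← IsGalois.fixedField_fixingSubgroup (adjoin F s),
    ← IsGalois.fixedField_fixingSubgroup (adjoin F t)]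
  congr 1
  ext σ
  simp only [mem_fixingSubgroup_iff, forall_mem_adjoin_apply_eq_self_iff, h]

end IntermediateField

theorem Subfield.closure_union_eq_toSubfield_adjoin {L : Type*} [Field L] (K : Subfield L)
    (s : Set L) : closure (K ∪ s) = (IntermediateField.adjoin K s).toSubfield := by
  rw [IntermediateField.adjoin_toSubfield]
  congr
  exact (Subtype.range_coe).symm

theorem forall_apply_eq_self_iff_of_eq_dite {α R : Type*} [Zero R] {q : α → Prop}
    [DecidablePred q] {f : α → R} {f' : Subtype q → R}
    (hf : ∀ a, f a = if h : q a then f' ⟨a, h⟩ else 0) {σ : R → R} (hσ : σ 0 = 0) :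
    (∀ a, σ (f a) = f a) ↔ ∀ a, σ (f' a) = f' a := by
  refine ⟨fun h a => ?_, fun h a => ?_⟩
  · simpa [hf, a.2] using h a
  · rw [hf]
    split_ifs
    exacts [h _, hσ]

section Blocks

variable {R : Type*} [Ring R]

theorem IsBlockIdem.mul_eq_zero_or_mul_eq_self {b e : R} (hb : IsBlockIdem b)
    (he : e ∈ Set.center R) (he' : IsIdempotentElem e) : b * e = 0 ∨ b * e = b := by
  obtain ⟨hbc, hbi, -, hprim⟩ := hb
  have hcomm : ∀ z : R, Commute b z := fun z => (Set.mem_center_iff.mp hbc).comm z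
  have hsplit : b = b * (1 - e) + b * e := by noncomm_ring
  have horth : b * (1 - e) * (b * e) = 0 := by
    rw [mul_assoc, ← mul_assoc (1 - e), ← (hcomm _).eq, mul_assoc, he'.one_sub_mul_self,
      mul_zero, mul_zero]
  have he₁ : 1 - e ∈ Set.center R := show 1 - e ∈ Subring.center R from sub_mem (one_mem _) he
  rcases hprim _ _ (Set.mul_mem_center hbc he₁) (Set.mul_mem_center hbc he)
      (hbi.mul_of_commute (hcomm _) he'.one_sub) (hbi.mul_of_commute (hcomm _) he') horth hsplit
    with h | h
  · rw [h, zero_add] at hsplit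
    exact Or.inr hsplit.symm
  · exact Or.inl h

theorem IsBlockIdem.eq_or_mul_eq_zero {b b' : R} (hb : IsBlockIdem b) (hb' : IsBlockIdem b') :
    b = b' ∨ b * b' = 0 := by
  have hcomm : b' * b = b * b' := ((Set.mem_center_iff.mp hb.1).comm b').eq.symm
  rcases hb.mul_eq_zero_or_mul_eq_self hb'.1 hb'.2.1 with h | h
  · exact Or.inr h
  rcases hb'.mul_eq_zero_or_mul_eq_self hb.1 hb.2.1 with h' | h'
  · exact Or.inr (hcomm ▸ h')
  · exact Or.inl (h.symm.trans (hcomm ▸ h'))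

theorem IsBlockIdem.map {S : Type*} [Ring S] (Φ : R ≃+* S) {b : R} (hb : IsBlockIdem b) :
    IsBlockIdem (Φ b) := by
  obtain ⟨hbc, hbi, hb0, hprim⟩ := hb
  refine ⟨MulEquivClass.apply_mem_center Φ hbc, hbi.map Φ, (map_ne_zero_iff Φ Φ.injective).mpr hb0,
    fun d e hd he hdi hei hde hsum => ?_⟩
  have := hprim (Φ.symm d) (Φ.symm e) (MulEquivClass.apply_mem_center _ hd)
    (MulEquivClass.apply_mem_center _ he) (hdi.map _) (hei.map _)
    (by rw [← map_mul, hde, map_zero]) (by rw [← map_add, ← hsum, Φ.symm_apply_apply])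
  simpa using this

end Blocks

namespace MonoidAlgebra

theorem mapRingEquiv_eq_self_iff {R G : Type*} [Semiring R] [Monoid G] (σ : R ≃+* R)
    (a : MonoidAlgebra R G) : mapRingEquiv G σ a = a ↔ ∀ g, σ (a.coeff g) = a.coeff g := by
  rw [← coeff_inj, Finsupp.ext_iff]
  simp only [coeff_mapRingEquiv]

variable {R G : Type*} [Semiring R] [Group G]

theorem coeff_mul_eq_sum [Fintype G] (x y : MonoidAlgebra R G) (g : G) :
    (x * y).coeff g = ∑ u, x.coeff u * y.coeff (u⁻¹ * g) := by
  rw [coeff_mul_apply_left, Finsupp.sum_fintype]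
  simp

theorem coeff_conj_of_mem_center {x : MonoidAlgebra R G} (hx : x ∈ Set.center (MonoidAlgebra R G))
    (t g : G) : x.coeff (t * g * t⁻¹) = x.coeff g := by
  have h := congrArg (fun z : MonoidAlgebra R G => z.coeff (t * g))
    ((Set.mem_center_iff.mp hx).comm (single t 1)).eq
  simpa using h

theorem coeff_mul_eq_sum_centralizer {p : ℕ} [Fact p.Prime] [CharP R p] [Fintype G]
    {P : Subgroup G} (hP : IsPGroup p P) {x y : MonoidAlgebra R G}
    (hx : x ∈ Set.center (MonoidAlgebra R G)) (hy : y ∈ Set.center (MonoidAlgebra R G)) {g : G}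
    (hg : g ∈ Subgroup.centralizer (P : Set G)) :
    (x * y).coeff g = ∑ u, if u ∈ Subgroup.centralizer (P : Set G)
      then x.coeff u * y.coeff (u⁻¹ * g) else 0 := by
  set C := Subgroup.centralizer (P : Set G)
  set f : G → R := fun u => x.coeff u * y.coeff (u⁻¹ * g)
  let _ : MulAction P G := MulAction.compHom G (ConjAct.toConjAct.toMonoidHom.comp P.subtype)
  have hfixed : ∀ u : G, u ∈ MulAction.fixedPoints P G ↔ u ∈ C := fun u =>
    ⟨fun hu q hq => mul_inv_eq_iff_eq_mul.mp (hu ⟨q, hq⟩),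
      fun hu q => show (q : G) * u * (q : G)⁻¹ = u by rw [hu q q.2, mul_inv_cancel_right]⟩
  have houtside : ∑ u, (if u ∈ C then 0 else f u) = 0 := by
    refine hP.sum_eq_zero_of_forall_mem_fixedPoints (fun q u => ?_) fun u hu => ?_
    · by_cases hu : u ∈ C
      · rw [(hfixed u).mpr hu]
      have hqu : q • u ∉ C := fun h => hu <| by
        have hfix : q⁻¹ • q • u = q • u := (hfixed _).mpr h q⁻¹
        rw [inv_smul_smul] at hfix
        rwa [hfix]
      obtain ⟨s, hs⟩ := q
      have hconj : (s * u * s⁻¹)⁻¹ * g = s * (u⁻¹ * g) * s⁻¹ := by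
        have hsg : s⁻¹ * g = g * s⁻¹ := hg _ (inv_mem hs)
        calc (s * u * s⁻¹)⁻¹ * g = s * u⁻¹ * (s⁻¹ * g) := by group
          _ = s * (u⁻¹ * g) * s⁻¹ := by rw [hsg]; group
      rw [if_neg hqu, if_neg hu]
      show x.coeff (s * u * s⁻¹) * y.coeff ((s * u * s⁻¹)⁻¹ * g) = f u
      rw [hconj, coeff_conj_of_mem_center hx, coeff_conj_of_mem_center hy]
    · rw [if_pos ((hfixed u).mp hu)]
  calc (x * y).coeff g = ∑ u, ((if u ∈ C then f u else 0) + if u ∈ C then 0 else f u) := by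
        rw [coeff_mul_eq_sum]
        refine Finset.sum_congr rfl fun u _ => ?_
        split_ifs <;> simp [f]
    _ = ∑ u, if u ∈ C then f u else 0 := by rw [Finset.sum_add_distrib, houtside, add_zero]

end MonoidAlgebra

open MonoidAlgebra

section Brauer

variable {k G : Type*} [Field k] [Group G]

theorem coeff_brauerTrunc (C : Set G) (a : MonoidAlgebra k G) (g : G) :
    (brauerTrunc C a).coeff g = if g ∈ C then a.coeff g else 0 := by
  simp [brauerTrunc, Finsupp.filter_apply]

theorem brauerTrunc_mapRingEquiv (σ : k ≃+* k) (C : Set G) (a : MonoidAlgebra k G) :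
    brauerTrunc C (mapRingEquiv G σ a) = mapRingEquiv G σ (brauerTrunc C a) := by
  ext g
  simp only [coeff_brauerTrunc, coeff_mapRingEquiv, apply_ite σ, map_zero]

theorem brauerTrunc_mul_of_mem_center {p : ℕ} [Fact p.Prime] [CharP k p] [Finite G]
    {P : Subgroup G} (hP : IsPGroup p P) {x y : MonoidAlgebra k G}
    (hx : x ∈ Set.center (MonoidAlgebra k G)) (hy : y ∈ Set.center (MonoidAlgebra k G)) :
    brauerTrunc (Subgroup.centralizer (P : Set G) : Set G) (x * y) =
      brauerTrunc (Subgroup.centralizer (P : Set G) : Set G)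
        (brauerTrunc (Subgroup.centralizer (P : Set G) : Set G) x *
          brauerTrunc (Subgroup.centralizer (P : Set G) : Set G) y) := by
  have := Fintype.ofFinite G
  ext g
  simp only [coeff_brauerTrunc, SetLike.mem_coe]
  split_ifs with hg
  · rw [coeff_mul_eq_sum_centralizer hP hx hy hg, coeff_mul_eq_sum]
    refine Finset.sum_congr rfl fun u _ => ?_
    simp only [coeff_brauerTrunc, SetLike.mem_coe]
    by_cases hu : u ∈ Subgroup.centralizer (P : Set G)
    · rw [if_pos hu, if_pos hu, if_pos (mul_mem (inv_mem hu) hg)]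
    · rw [if_neg hu, if_neg hu, zero_mul]
  · rfl

end Brauer

section BrauerImage

variable {p : ℕ} [Fact p.Prime] {k G : Type*} [Field k] [CharP k p] [Group G] [Finite G]
  {P : Subgroup G} {b : MonoidAlgebra k G}

theorem IsBlockIdem.eq_of_brauerTrunc_eq (hP : IsPGroup p P) {b' : MonoidAlgebra k G}
    (hb : IsBlockIdem b) (hb' : IsBlockIdem b')
    (h : brauerTrunc (Subgroup.centralizer (P : Set G) : Set G) b =
      brauerTrunc (Subgroup.centralizer (P : Set G) : Set G) b')
    (hne : brauerTrunc (Subgroup.centralizer (P : Set G) : Set G) b ≠ 0) : b = b' := by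
  set C : Set G := (Subgroup.centralizer (P : Set G) : Set G)
  refine (hb.eq_or_mul_eq_zero hb').resolve_right fun hbb' => hne ?_
  calc brauerTrunc C b = brauerTrunc C (b * b) := by rw [hb.2.1.eq]
    _ = brauerTrunc C (brauerTrunc C b * brauerTrunc C b) :=
      brauerTrunc_mul_of_mem_center hP hb.1 hb.1
    _ = brauerTrunc C (brauerTrunc C b * brauerTrunc C b') := by rw [← h]
    _ = brauerTrunc C (b * b') := (brauerTrunc_mul_of_mem_center hP hb.1 hb'.1).symm
    _ = 0 := by
      ext g
      simp [hbb', coeff_brauerTrunc]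

theorem IsBlockIdem.mapRingEquiv_eq_self_iff (hP : IsPGroup p P) (hb : IsBlockIdem b)
    (hne : brauerTrunc (Subgroup.centralizer (P : Set G) : Set G) b ≠ 0) (σ : k ≃+* k) :
    mapRingEquiv G σ b = b ↔
      mapRingEquiv G σ (brauerTrunc (Subgroup.centralizer (P : Set G) : Set G) b) =
        brauerTrunc (Subgroup.centralizer (P : Set G) : Set G) b := by
  rw [← brauerTrunc_mapRingEquiv]
  refine ⟨fun h => by rw [h], fun h => (hb.map _).eq_of_brauerTrunc_eq hP hb h ?_⟩
  rwa [h]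

end BrauerImage

/-- Proposition 2.2: if `b` is a block of `k'G` with defect group `P` and `c` is its
Brauer correspondent in `k'N_G(P)` (the unique block of `k'N_G(P)` with defect group `P`
such that `Br_P b = Br_P c`), then the subfield of `k'` generated over a subfield `k`
by the coefficients of `b` equals the one generated by the coefficients of `c`. -/
theorem field_of_block_eq_field_of_brauer_correspondent
    (p : ℕ) [Fact p.Prime]
    (k' : Type*) [Field k'] [CharP k' p] [Finite k'] (k : Subfield k')
    (G : Type*) [Group G] [Finite G]
    (P : Subgroup G)
    (b : MonoidAlgebra k' G) (hb : IsBlockIdem b) (hbP : IsDefectGroup p b P)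
    (c : MonoidAlgebra k' (Subgroup.normalizer (P : Set G))) (hc : IsBlockIdem c)
    (hcP : IsDefectGroup p c (P.subgroupOf (Subgroup.normalizer (P : Set G))))
    (hcorr : ∀ g : G,
      (brauerTrunc (Subgroup.centralizer (P : Set G) : Set G) b).coeff g =
        if h : g ∈ (Subgroup.normalizer (P : Set G)) then
          (brauerTrunc
            (Subgroup.centralizer ((P.subgroupOf (Subgroup.normalizer (P : Set G)) : Subgroup (Subgroup.normalizer (P : Set G))) :
              Set (Subgroup.normalizer (P : Set G))) : Set (Subgroup.normalizer (P : Set G))) c).coeff ⟨g, h⟩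
        else 0) :
    Subfield.closure ((k : Set k') ∪ Set.range fun g : G => b.coeff g) =
      Subfield.closure ((k : Set k') ∪ Set.range fun h : (Subgroup.normalizer (P : Set G)) => c.coeff h) := by
  have fixed_iff : ∀ σ : k' ≃+* k',
      (∀ g, σ (b.coeff g) = b.coeff g) ↔ ∀ h, σ (c.coeff h) = c.coeff h := by
    intro σ
    rw [← mapRingEquiv_eq_self_iff, ← mapRingEquiv_eq_self_iff,
      hb.mapRingEquiv_eq_self_iff hbP.1 hbP.2.1, hc.mapRingEquiv_eq_self_iff hcP.1 hcP.2.1,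
      mapRingEquiv_eq_self_iff, mapRingEquiv_eq_self_iff]
    exact forall_apply_eq_self_iff_of_eq_dite hcorr (map_zero σ)
  rw [Subfield.closure_union_eq_toSubfield_adjoin, Subfield.closure_union_eq_toSubfield_adjoin,
    IntermediateField.adjoin_eq_of_forall_apply_eq_self_iff fun σ => ?_]
  simp only [Set.forall_mem_range]
  exact fixed_iff σ.toRingEquiv
end
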